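/- Let X_1,...,X_n be n real-valued random variables with maximum X_{n:n} = max(X_1,...,X_n), and assume condition (v1): lim_{x→∞} P(X_i > x, X_j > x)/P(X_{n:n} > x) = 0 for all 1 ≤ i < j ≤ n. If for some α > 0 the distribution function of each X_i is regularly varying with index −α (X_i ∈ 𝓡_{−α}) for every 1 ≤ i ≤ n, then X_{n:n} ∈ 𝓡_{−α}. -/

import Mathlib

open MeasureTheory Filter Topology Asymptotics

noncomputable section

/-- Tail probability `P(Y > x)` of a real random variable. -/
def tailP {Ω : Type*} [MeasurableSpace Ω] (μ : Measure Ω) (Y : Ω → ℝ) (x : ℝ) : ℝ :=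
  (μ {ω | x < Y ω}).toReal

/-- The maximum `X_{n:n}` of finitely many random variables. -/
def maxRV {Ω : Type*} {n : ℕ} (X : Fin n → Ω → ℝ) (ω : Ω) : ℝ := ⨆ i, X i ω

/-- The `i`-th largest value (descending order statistic, `0`-indexed):
`ordDesc X i = X_{n-i:n}`. -/
def ordDesc {Ω : Type*} {n : ℕ} (X : Fin n → Ω → ℝ) (i : Fin n) (ω : Ω) : ℝ :=
  (((List.ofFn fun j => X j ω).mergeSort fun a b => decide (b ≤ a)).getD i 0)

/-- A tail function `T = 1 - F` is long-tailed (`F ∈ 𝓛`). -/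
def LongTailedT (T : ℝ → ℝ) : Prop :=
  (∀ x : ℝ, 0 ≤ x → 0 < T x) ∧
  ∀ y : ℝ, Tendsto (fun x => T (x + y) / T x) atTop (𝓝 1)

/-- A function is dominatedly varying. -/
def DomVarFun (h : ℝ → ℝ) : Prop :=
  ∀ y : ℝ, 0 < y →
    (0 : EReal) < atTop.liminf (fun x => ((h (x * y) / h x : ℝ) : EReal)) ∧
    atTop.limsup (fun x => ((h (x * y) / h x : ℝ) : EReal)) < ⊤

/-- A function is weakly self-neglecting. -/
def WeaklySelfNeg (h : ℝ → ℝ) : Prop :=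
  ∀ y : ℝ, atTop.limsup (fun x => ((h (x + y * h x) / h x : ℝ) : EReal)) < ⊤

/-- `h ∈ 𝓗_F` where `T = 1 - F` is the tail of `F`. -/
def MemScaleClass (T h : ℝ → ℝ) : Prop :=
  (∀ᶠ x in atTop, 0 < h x) ∧
  (h =o[atTop] fun x : ℝ => x) ∧
  (∀ y : ℝ, Tendsto (fun x => T (x + y * h x) / T x) atTop (𝓝 1)) ∧
  WeaklySelfNeg h

/-- Upper endpoint `x_F = sup {x : F(x) < 1}` of a distribution with tail `T = 1 - F`. -/
def upEnd (T : ℝ → ℝ) : EReal := sSup ((fun x : ℝ => (x : EReal)) '' {x | 0 < T x})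

open Classical in
/-- The filter of "`x → x_F`". -/
def endFilter (T : ℝ → ℝ) : Filter ℝ :=
  if upEnd T = ⊤ then atTop else 𝓝[<] (upEnd T).toReal

/-- `F ∈ GMDA(h)` for `T = 1 - F`. -/
def MemGMDA (T h : ℝ → ℝ) : Prop :=
  (∀ x, 0 < h x) ∧
  ∀ y : ℝ, Tendsto (fun x => T (x + y * h x) / T x) (endFilter T) (𝓝 (Real.exp (-y)))

/-- Condition (DS1) (for all `t > 0`). -/
def DS1 {Ω : Type*} [MeasurableSpace Ω] (μ : Measure Ω) {n : ℕ} (X : Fin n → Ω → ℝ)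
    (h : ℝ → ℝ) : Prop :=
  ∀ t : ℝ, 0 < t → ∀ i j : Fin n, i ≠ j →
    Tendsto (fun x => (μ {ω | t * h x < |X i ω| ∧ x < X j ω}).toReal / tailP μ (maxRV X) x)
      atTop (𝓝 0)

/-- Condition (DS2) for a given `L > 0`. -/
def DS2 {Ω : Type*} [MeasurableSpace Ω] (μ : Measure Ω) {n : ℕ} (X : Fin n → Ω → ℝ)
    (h : ℝ → ℝ) (L : ℝ) : Prop :=
  ∀ i j : Fin n, i < j →
    Tendsto (fun x => (μ {ω | L * h x < X i ω ∧ L * h x < X j ω}).toReal / tailP μ (maxRV X) x)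
      atTop (𝓝 0)

/-- Condition (v1). -/
def CondV1 {Ω : Type*} [MeasurableSpace Ω] (μ : Measure Ω) {n : ℕ} (X : Fin n → Ω → ℝ) : Prop :=
  ∀ i j : Fin n, i < j →
    Tendsto (fun x => (μ {ω | x < X i ω ∧ x < X j ω}).toReal / tailP μ (maxRV X) x)
      atTop (𝓝 0)

/-- Assumption A: `X_{n:n}` has an infinite upper endpoint, `X_{n:n} ∈ GMDA(h)`,
(DS1) holds for all `t > 0` and (DS2) for some `L > 0`. -/
def AssumptionA {Ω : Type*} [MeasurableSpace Ω] (μ : Measure Ω) {n : ℕ}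
    (X : Fin n → Ω → ℝ) : Prop :=
  ∃ h : ℝ → ℝ,
    (∀ x : ℝ, 0 < tailP μ (maxRV X) x) ∧
    MemGMDA (tailP μ (maxRV X)) h ∧
    DS1 μ X h ∧ ∃ L : ℝ, 0 < L ∧ DS2 μ X h L

/-- Assumption B: `X_{n:n} ∈ 𝓛` and some `h ∈ 𝓗_{X_{n:n}}` satisfies (DS1) for all `t > 0`
and (DS2) for some `L > 0`. -/
def AssumptionB {Ω : Type*} [MeasurableSpace Ω] (μ : Measure Ω) {n : ℕ}
    (X : Fin n → Ω → ℝ) : Prop :=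
  LongTailedT (tailP μ (maxRV X)) ∧
  ∃ h : ℝ → ℝ, MemScaleClass (tailP μ (maxRV X)) h ∧
    DS1 μ X h ∧ ∃ L : ℝ, 0 < L ∧ DS2 μ X h L

/-- Assumption C: `X_{n:n} ∈ 𝓛 ∩ 𝓓` and some dominatedly varying `h ∈ 𝓗_{X_{n:n}}`
satisfies (DS1) for all `t > 0`. -/
def AssumptionC {Ω : Type*} [MeasurableSpace Ω] (μ : Measure Ω) {n : ℕ}
    (X : Fin n → Ω → ℝ) : Prop :=
  LongTailedT (tailP μ (maxRV X)) ∧ DomVarFun (tailP μ (maxRV X)) ∧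
  ∃ h : ℝ → ℝ, DomVarFun h ∧ MemScaleClass (tailP μ (maxRV X)) h ∧ DS1 μ X h

/-- The uniform (in the weights `c ∈ K`) max-sum asymptotic equivalence (max-sum0):
`P(∑ c_i X_{n-i:n} > x) ~ P(c_0 X_{n:n} > x) ~ ∑ P(c_0 X_i > x)` uniformly on `K`. -/
def UnifMaxSum {Ω : Type*} [MeasurableSpace Ω] (μ : Measure Ω) {n : ℕ} [NeZero n]
    (X : Fin n → Ω → ℝ) (K : Set (Fin n → ℝ)) : Prop :=
  TendstoUniformlyOn
    (fun x (c : Fin n → ℝ) =>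
      tailP μ (fun ω => ∑ i, c i * ordDesc X i ω) x /
        tailP μ (fun ω => c 0 * maxRV X ω) x) 1 atTop K ∧
  TendstoUniformlyOn
    (fun x (c : Fin n → ℝ) =>
      tailP μ (fun ω => c 0 * maxRV X ω) x /
        ∑ i, tailP μ (fun ω => c 0 * X i ω) x) 1 atTop K

end

/-- A tail function is regularly varying with index `-α`. -/
def RegVarTail (T : ℝ → ℝ) (α : ℝ) : Prop :=
  ∀ y : ℝ, 0 < y → Tendsto (fun x => T (x * y) / T x) atTop (𝓝 (y ^ (-α)))

/-! With `S x = ∑ i, P(X_i > x)`, the union bound and the Bonferroni inequality give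
`P(X_{n:n} > x) ≤ S x ≤ P(X_{n:n} > x) + ∑_{i<j} P(X_i > x, X_j > x)`, so under (v1)
`P(X_{n:n} > x) ~ S x`. A finite sum of nonnegative functions that are regularly varying with the
same index is regularly varying with that index, and regular variation passes along asymptotic
equivalence. -/

namespace Asymptotics

theorem IsEquivalent.finsetSum_of_nonneg {α ι : Type*} {l : Filter α} {s : Finset ι}
    {f g : ι → α → ℝ} (hg : ∀ i ∈ s, 0 ≤ g i) (h : ∀ i ∈ s, f i ~[l] g i) :
    (fun x => ∑ i ∈ s, f i x) ~[l] fun x => ∑ i ∈ s, g i x := by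
  classical
  induction s using Finset.induction_on with
  | empty => simpa using IsEquivalent.refl
  | insert a s ha ih =>
    simp only [Finset.sum_insert ha]
    exact (h a (s.mem_insert_self a)).add_add_of_nonneg (hg a (s.mem_insert_self a))
      (fun x => Finset.sum_nonneg fun i hi => hg i (Finset.mem_insert_of_mem hi) x)
      (ih (fun i hi => hg i (Finset.mem_insert_of_mem hi))
        fun i hi => h i (Finset.mem_insert_of_mem hi))

end Asymptotics

section RegVarTail

variable {T U : ℝ → ℝ} {α : ℝ}

theorem regVarTail_iff_isEquivalent (hT : ∀ᶠ x in atTop, T x ≠ 0) :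
    RegVarTail T α ↔ ∀ y, 0 < y → (fun x => T (x * y)) ~[atTop] fun x => y ^ (-α) * T x := by
  refine forall₂_congr fun y hy => ?_
  have hc : y ^ (-α) ≠ 0 := (Real.rpow_pos_of_pos hy _).ne'
  have hratio : (fun x => T (x * y) / T x) * T =ᶠ[atTop] fun x => T (x * y) :=
    hT.mono fun x hx => div_mul_cancel₀ _ hx
  rw [← isEquivalent_const_iff_tendsto hc]
  constructor
  · intro h
    exact (h.mul (IsEquivalent.refl (u := T))).congr_left hratio
  · intro h
    exact (h.div (IsEquivalent.refl (u := T))).congr_right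
      (hT.mono fun x hx => mul_div_cancel_right₀ _ hx)

theorem RegVarTail.of_isEquivalent (h : T ~[atTop] U) (hU : RegVarTail U α) :
    RegVarTail T α := fun y hy =>
  ((h.comp_tendsto (tendsto_id.atTop_mul_const hy)).div h).symm.tendsto_nhds (hU y hy)

theorem RegVarTail.pos_of_antitone (hR : RegVarTail T α) (hT : Antitone T) (hT0 : 0 ≤ T)
    (x : ℝ) : 0 < T x := by
  by_contra! hx
  -- the ratio is then eventually the junk value `0 / 0 = 0`, not `2 ^ (-α) > 0`
  have hzero : ∀ᶠ z in atTop, T (z * 2) / T z = 0 := by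
    filter_upwards [eventually_ge_atTop x] with z hz
    rw [le_antisymm ((hT hz).trans hx) (hT0 z), div_zero]
  exact (Real.rpow_pos_of_pos two_pos (-α)).ne'
    (tendsto_nhds_unique (hR 2 two_pos) (tendsto_const_nhds.congr' (hzero.mono fun _ h => h.symm)))

theorem RegVarTail.sum {ι : Type*} [Fintype ι] [Nonempty ι] {f : ι → ℝ → ℝ}
    (hpos : ∀ i x, 0 < f i x) (hR : ∀ i, RegVarTail (f i) α) :
    RegVarTail (fun x => ∑ i, f i x) α := by
  have hne : ∀ i, ∀ᶠ x in atTop, f i x ≠ 0 := fun i => .of_forall fun x => (hpos i x).ne'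
  rw [regVarTail_iff_isEquivalent (.of_forall fun x =>
    (Finset.sum_pos (fun i _ => hpos i x) Finset.univ_nonempty).ne')]
  intro y hy
  simpa only [Finset.mul_sum] using IsEquivalent.finsetSum_of_nonneg
    (fun i _ x => mul_nonneg (Real.rpow_nonneg hy.le _) (hpos i x).le)
    fun i _ => (regVarTail_iff_isEquivalent (hne i)).1 (hR i) y hy

end RegVarTail

namespace MeasureTheory

theorem sum_measureReal_le_measureReal_biUnion_add {Ω ι : Type*} [MeasurableSpace Ω]
    {μ : Measure Ω} [IsFiniteMeasure μ] [LinearOrder ι] {A : ι → Set Ω}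
    (hA : ∀ i, MeasurableSet (A i)) (s : Finset ι) :
    ∑ i ∈ s, μ.real (A i) ≤
      μ.real (⋃ i ∈ s, A i) + ∑ i ∈ s, ∑ j ∈ s with i < j, μ.real (A i ∩ A j) := by
  classical
  induction s using Finset.induction_on_max with
  | empty => simp
  | insert a s has ih =>
    have ha : a ∉ s := fun h => lt_irrefl a (has a h)
    set U := ⋃ i ∈ s, A i
    have hpairs : ∑ i ∈ insert a s, ∑ j ∈ insert a s with i < j, μ.real (A i ∩ A j) =
        ∑ i ∈ s, μ.real (A i ∩ A a) + ∑ i ∈ s, ∑ j ∈ s with i < j, μ.real (A i ∩ A j) := by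
      have hnone : ∀ j ∈ s, ¬a < j := fun j hj => (has j hj).asymm
      rw [Finset.sum_insert ha, ← Finset.sum_add_distrib, Finset.filter_insert,
        if_neg (lt_irrefl a), Finset.filter_false_of_mem hnone, Finset.sum_empty, zero_add]
      refine Finset.sum_congr rfl fun i hi => ?_
      rw [Finset.filter_insert, if_pos (has i hi),
        Finset.sum_insert fun h => ha (Finset.mem_of_mem_filter a h)]
    have hunion : μ.real (A a ∪ U) + μ.real (A a ∩ U) = μ.real (A a) + μ.real U :=
      measureReal_union_add_inter (s.measurableSet_biUnion fun i _ => hA i)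
        (h₂ := measure_ne_top μ U)
    have hinter : μ.real (A a ∩ U) ≤ ∑ i ∈ s, μ.real (A i ∩ A a) := by
      simp_rw [U, Set.inter_iUnion₂, Set.inter_comm (A a)]
      exact measureReal_biUnion_finset_le s _
    rw [Finset.sum_insert ha, Finset.set_biUnion_insert, hpairs]
    linarith

end MeasureTheory

section MaxTail

variable {Ω : Type*} {n : ℕ}

theorem setOf_lt_maxRV [NeZero n] (X : Fin n → Ω → ℝ) (x : ℝ) :
    {ω | x < maxRV X ω} = ⋃ i, {ω | x < X i ω} := by
  ext ω
  simp only [Set.mem_iUnion]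
  exact lt_ciSup_iff (Set.finite_range fun i => X i ω).bddAbove

variable [MeasurableSpace Ω] {μ : Measure Ω}

theorem tailP_nonneg (Y : Ω → ℝ) (x : ℝ) : 0 ≤ tailP μ Y x := ENNReal.toReal_nonneg

theorem tailP_antitone [IsFiniteMeasure μ] (Y : Ω → ℝ) : Antitone (tailP μ Y) :=
  fun _ _ hxy => measureReal_mono fun _ h => hxy.trans_lt h

theorem tailP_le_tailP_maxRV [IsFiniteMeasure μ] (X : Fin n → Ω → ℝ) (i : Fin n) (x : ℝ) :
    tailP μ (X i) x ≤ tailP μ (maxRV X) x :=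
  measureReal_mono fun ω h => h.trans_le (le_ciSup (Set.finite_range fun j => X j ω).bddAbove i)

theorem tailP_maxRV_le_sum [IsFiniteMeasure μ] [NeZero n] (X : Fin n → Ω → ℝ) (x : ℝ) :
    tailP μ (maxRV X) x ≤ ∑ i, tailP μ (X i) x := by
  rw [tailP, setOf_lt_maxRV]
  exact measureReal_iUnion_fintype_le _

theorem sum_tailP_le_tailP_maxRV_add [IsFiniteMeasure μ] [NeZero n] {X : Fin n → Ω → ℝ}
    (hX : ∀ i, Measurable (X i)) (x : ℝ) :
    ∑ i, tailP μ (X i) x ≤ tailP μ (maxRV X) x +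
      ∑ i, ∑ j with i < j, (μ {ω | x < X i ω ∧ x < X j ω}).toReal := by
  rw [tailP, setOf_lt_maxRV]
  have h := sum_measureReal_le_measureReal_biUnion_add (μ := μ)
    (A := fun i => {ω | x < X i ω}) (fun i => measurableSet_lt measurable_const (hX i)) .univ
  simp only [Finset.mem_univ, Set.iUnion_true] at h
  exact h

theorem CondV1.isEquivalent_tailP_maxRV [IsFiniteMeasure μ] [NeZero n] {X : Fin n → Ω → ℝ}
    (hv1 : CondV1 μ X)
    (hX : ∀ i, Measurable (X i)) (hM : ∀ x, 0 < tailP μ (maxRV X) x) :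
    tailP μ (maxRV X) ~[atTop] fun x => ∑ i, tailP μ (X i) x := by
  have hpairs : Tendsto (fun x => (∑ i, ∑ j with i < j,
      (μ {ω | x < X i ω ∧ x < X j ω}).toReal) / tailP μ (maxRV X) x) atTop (𝓝 0) := by
    simp_rw [Finset.sum_div]
    simpa using tendsto_finsetSum _ fun i _ =>
      tendsto_finsetSum _ fun j hj => hv1 i j (Finset.mem_filter.1 hj).2
  have hratio : Tendsto (fun x => (∑ i, tailP μ (X i) x) / tailP μ (maxRV X) x) atTop (𝓝 1) := by
    refine tendsto_of_tendsto_of_tendsto_of_le_of_le tendsto_const_nhds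
      (by simpa using hpairs.const_add 1) (fun x => ?_) (fun x => ?_)
    · exact (one_le_div (hM x)).2 (tailP_maxRV_le_sum X x)
    · rw [one_add_div (hM x).ne']
      exact div_le_div_of_nonneg_right (sum_tailP_le_tailP_maxRV_add hX x) (hM x).le
  exact (isEquivalent_of_tendsto_one hratio).symm

end MaxTail

theorem max_reg_var_of_v1_general
    {Ω : Type*} [MeasurableSpace Ω] (μ : Measure Ω) [IsProbabilityMeasure μ]
    {n : ℕ} [NeZero n] (X : Fin n → Ω → ℝ) (hXm : ∀ i, Measurable (X i))
    (hv1 : CondV1 μ X)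
    (α : ℝ)
    (hR : ∀ i, RegVarTail (tailP μ (X i)) α) :
    RegVarTail (tailP μ (maxRV X)) α := by
  have hpos : ∀ i x, 0 < tailP μ (X i) x := fun i =>
    (hR i).pos_of_antitone (tailP_antitone _) (tailP_nonneg _)
  have hM : ∀ x, 0 < tailP μ (maxRV X) x := fun x =>
    (hpos 0 x).trans_le (tailP_le_tailP_maxRV X 0 x)
  exact .of_isEquivalent (hv1.isEquivalent_tailP_maxRV hXm hM) (.sum hpos hR)

/-- Lemma 4.1(b), regular variation case: under (v1), if every
`X_i ∈ 𝓡_{-α}` for some `α > 0`, then `X_{n:n} ∈ 𝓡_{-α}`. -/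
theorem max_reg_var_of_v1
    {Ω : Type*} [MeasurableSpace Ω] (μ : Measure Ω) [IsProbabilityMeasure μ]
    {n : ℕ} [NeZero n] (X : Fin n → Ω → ℝ) (hXm : ∀ i, Measurable (X i))
    (hv1 : CondV1 μ X)
    (α : ℝ) (hα : 0 < α)
    (hR : ∀ i, RegVarTail (tailP μ (X i)) α) :
    RegVarTail (tailP μ (maxRV X)) α :=
  max_reg_var_of_v1_general μ X hXm hv1 α hR
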